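/- With the same notation, |⟨ε_{k/n}, δ_{k/n}⟩² − 1/(4n)| = (1/(4n))(√(k+1) − √k)|√(k+1) − √k − 2|, and the sum over k from 0 to n−1 of |⟨ε_{k/n}, δ_{k/n}⟩² − 1/(4n)| is O(1/√n) as n → ∞. -/

import Mathlib

open Real Finset Asymptotics

/-- `⟨ε_{k/n}, δ_{k/n}⟩ = (1/(2√n))(√(k+1) − √k − 1)`. -/
noncomputable def epsDeltaDiag (n k : ℕ) : ℝ :=
  (1 / (2 * Real.sqrt n)) * (Real.sqrt (k + 1) - Real.sqrt k - 1)

/-!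
Write `d_k = √(k+1) − √k ∈ [0, 1]`. Since `⟨ε, δ⟩ = (d_k − 1)/(2√n)`, we get
`⟨ε, δ⟩² − 1/(4n) = d_k (d_k − 2)/(4n)`, which gives the identity. As `|d_k − 2| ≤ 2`,
each term is at most `d_k/(2n)`, and the `d_k` telescope to `√n`, so the sum is at most
`√n/(2n) = 1/(2√n)`.
-/

namespace Real

theorem sqrt_add_one_sub_sqrt_nonneg (x : ℝ) : 0 ≤ √(x + 1) - √x :=
  sub_nonneg.2 (sqrt_le_sqrt (by linarith))

theorem sqrt_add_one_sub_sqrt_le_one (x : ℝ) : √(x + 1) - √x ≤ 1 := by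
  rw [sub_le_iff_le_add, sqrt_le_iff, add_sq, sq_sqrt']
  constructor <;> nlinarith [sqrt_nonneg x, le_max_left x 0]

theorem sum_range_sqrt_succ_sub_sqrt (n : ℕ) :
    ∑ k ∈ range n, (√((k : ℝ) + 1) - √k) = √n := by
  simpa using sum_range_sub (fun k : ℕ => √(k : ℝ)) n

end Real

theorem epsDeltaDiag_sq_sub (n k : ℕ) :
    epsDeltaDiag n k ^ 2 - 1 / (4 * n)
      = 1 / (4 * n) * ((√(k + 1) - √k) * (√(k + 1) - √k - 2)) := by
  have hscale : (1 / (2 * √n)) ^ 2 = 1 / (4 * n) := by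
    rw [div_pow, mul_pow, sq_sqrt n.cast_nonneg]
    norm_num
  rw [epsDeltaDiag, mul_pow, hscale]
  ring

theorem abs_epsDeltaDiag_sq_sub (n k : ℕ) :
    |epsDeltaDiag n k ^ 2 - 1 / (4 * n)|
      = 1 / (4 * n) * (√(k + 1) - √k) * |√(k + 1) - √k - 2| := by
  rw [epsDeltaDiag_sq_sub, abs_mul, abs_mul, abs_of_nonneg (by positivity),
    abs_of_nonneg (sqrt_add_one_sub_sqrt_nonneg k), mul_assoc]

theorem abs_epsDeltaDiag_sq_sub_le (n k : ℕ) :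
    |epsDeltaDiag n k ^ 2 - 1 / (4 * n)| ≤ 1 / (2 * n) * (√(k + 1) - √k) := by
  have hd₀ := sqrt_add_one_sub_sqrt_nonneg k
  have hd₁ := sqrt_add_one_sub_sqrt_le_one k
  have hgap : |√(k + 1) - √k - 2| ≤ 2 := by
    rw [abs_le]
    constructor <;> linarith
  calc |epsDeltaDiag n k ^ 2 - 1 / (4 * n)|
      = 1 / (4 * n) * (√(k + 1) - √k) * |√(k + 1) - √k - 2| := abs_epsDeltaDiag_sq_sub n k
    _ ≤ 1 / (4 * n) * (√(k + 1) - √k) * 2 := by gcongr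
    _ = 1 / (2 * n) * (√(k + 1) - √k) := by ring

theorem sum_abs_epsDeltaDiag_sq_sub_le (n : ℕ) :
    ∑ k ∈ range n, |epsDeltaDiag n k ^ 2 - 1 / (4 * n)| ≤ 1 / 2 * (1 / √n) :=
  calc ∑ k ∈ range n, |epsDeltaDiag n k ^ 2 - 1 / (4 * n)|
      ≤ ∑ k ∈ range n, 1 / (2 * n) * (√((k : ℝ) + 1) - √k) :=
        sum_le_sum fun k _ => abs_epsDeltaDiag_sq_sub_le n k
    _ = 1 / 2 * (√n / n) := by
        rw [← mul_sum, sum_range_sqrt_succ_sub_sqrt]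
        ring
    _ = 1 / 2 * (1 / √n) := by rw [sqrt_div_self']

theorem epsDeltaDiag_sq_identity_and_sum :
    (∀ n : ℕ, 1 ≤ n → ∀ k : ℕ,
      |epsDeltaDiag n k ^ 2 - 1 / (4 * n)|
        = (1 / (4 * n)) * (Real.sqrt (k + 1) - Real.sqrt k)
            * |Real.sqrt (k + 1) - Real.sqrt k - 2|)
    ∧ (fun n : ℕ => ∑ k ∈ Finset.range n, |epsDeltaDiag n k ^ 2 - 1 / (4 * n)|)
        =O[Filter.atTop] (fun n : ℕ => 1 / Real.sqrt n) := by
  refine ⟨fun n _ k => abs_epsDeltaDiag_sq_sub n k, IsBigO.of_bound (1 / 2) ?_⟩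
  refine Filter.Eventually.of_forall fun n => ?_
  rw [norm_of_nonneg (sum_nonneg fun k _ => abs_nonneg _),
    norm_of_nonneg (by positivity)]
  exact sum_abs_epsDeltaDiag_sq_sub_le n
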